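/- arXiv:math-ph/0101011 — 2 statements merged into one kernel-verified Lean document; each statement's English description precedes it below -/
import Mathlib

section
/- Let A > B > 0 with A² − B² = 1, g̃ = A·R(φ) + B·S(ψ), and set η = −(φ+ψ)/2 and η' = π/2 − (φ+ψ)/2. Then g̃ v(η) = (A+B) v((φ−ψ)/2) and g̃ v(η') = (A−B) v(π/2 + (φ−ψ)/2); in particular ‖g̃ v(η)‖ = A + B > 1 and ‖g̃ v(η')‖ = A − B < 1. -/
theorem stmt_5 (A B φ ψ : ℝ) (hAB : A > B) (hB : B > 0) (hW : A ^ 2 - B ^ 2 = 1)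
    (g : Matrix (Fin 2) (Fin 2) ℝ)
    (hg : g = A • !![Real.cos φ, -Real.sin φ; Real.sin φ, Real.cos φ]
            + B • !![Real.cos ψ, -Real.sin ψ; -Real.sin ψ, -Real.cos ψ])
    (η η' : ℝ) (hη : η = -(φ + ψ) / 2) (hη' : η' = Real.pi / 2 - (φ + ψ) / 2) :
    g.mulVec ![Real.cos η, Real.sin η]
        = (A + B) • ![Real.cos ((φ - ψ) / 2), Real.sin ((φ - ψ) / 2)] ∧
    g.mulVec ![Real.cos η', Real.sin η']
        = (A - B) • ![Real.cos (Real.pi / 2 + (φ - ψ) / 2),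
                      Real.sin (Real.pi / 2 + (φ - ψ) / 2)] ∧
    Real.sqrt ((g.mulVec ![Real.cos η, Real.sin η] 0) ^ 2
        + (g.mulVec ![Real.cos η, Real.sin η] 1) ^ 2) = A + B ∧
    Real.sqrt ((g.mulVec ![Real.cos η', Real.sin η'] 0) ^ 2
        + (g.mulVec ![Real.cos η', Real.sin η'] 1) ^ 2) = A - B ∧
    A + B > 1 ∧ A - B < 1 := by
  have hABpos : A + B > 0 := by linarith
  have hABd : A - B > 0 := by linarith
  set d := (φ - ψ) / 2 with hd
  have e1 : g.mulVec ![Real.cos η, Real.sin η]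
      = (A + B) • ![Real.cos d, Real.sin d] := by
    subst hg
    have c1 : Real.cos φ = Real.cos (d - η) := by congr 1; rw [hη, hd]; ring
    have s1 : Real.sin φ = Real.sin (d - η) := by congr 1; rw [hη, hd]; ring
    have c2 : Real.cos ψ = Real.cos (-d - η) := by congr 1; rw [hη, hd]; ring
    have s2 : Real.sin ψ = Real.sin (-d - η) := by congr 1; rw [hη, hd]; ring
    funext i
    fin_cases i <;>
      simp [Matrix.mulVec, dotProduct, Fin.sum_univ_two, c1, s1, c2, s2,
        Real.cos_sub, Real.sin_sub, Real.cos_neg, Real.sin_neg]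
    · linear_combination ((A + B) * Real.cos d) * Real.sin_sq_add_cos_sq η
    · linear_combination ((A + B) * Real.sin d) * Real.sin_sq_add_cos_sq η
  have e2 : g.mulVec ![Real.cos η', Real.sin η']
      = (A - B) • ![Real.cos (Real.pi / 2 + d), Real.sin (Real.pi / 2 + d)] := by
    subst hg
    have c1 : Real.cos φ = -Real.sin d * Real.cos η' + Real.cos d * Real.sin η' := by
      rw [show φ = (d + Real.pi / 2) - η' by rw [hη', hd]; ring,
        Real.cos_sub, Real.cos_add, Real.sin_add]
      simp
    have s1 : Real.sin φ = Real.cos d * Real.cos η' + Real.sin d * Real.sin η' := by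
      rw [show φ = (d + Real.pi / 2) - η' by rw [hη', hd]; ring,
        Real.sin_sub, Real.cos_add, Real.sin_add]
      simp
    have c2 : Real.cos ψ = Real.sin d * Real.cos η' + Real.cos d * Real.sin η' := by
      rw [show ψ = (Real.pi / 2 - d) - η' by rw [hη', hd]; ring,
        Real.cos_sub, Real.cos_pi_div_two_sub, Real.sin_pi_div_two_sub]
    have s2 : Real.sin ψ = Real.cos d * Real.cos η' - Real.sin d * Real.sin η' := by
      rw [show ψ = (Real.pi / 2 - d) - η' by rw [hη', hd]; ring,
        Real.sin_sub, Real.cos_pi_div_two_sub, Real.sin_pi_div_two_sub]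
    have c3 : Real.cos (Real.pi / 2 + d) = -Real.sin d := by
      rw [Real.cos_add]; simp
    have s3 : Real.sin (Real.pi / 2 + d) = Real.cos d := by
      rw [Real.sin_add]; simp
    funext i
    fin_cases i <;>
      simp [Matrix.mulVec, dotProduct, Fin.sum_univ_two, c1, s1, c2, s2, c3, s3]
    · linear_combination (-(A - B) * Real.sin d) * Real.sin_sq_add_cos_sq η'
    · linear_combination ((A - B) * Real.cos d) * Real.sin_sq_add_cos_sq η'
  refine ⟨e1, e2, ?_, ?_, ?_, ?_⟩
  · rw [e1]
    have : ((A + B) • ![Real.cos d, Real.sin d]) 0 ^ 2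
        + ((A + B) • ![Real.cos d, Real.sin d]) 1 ^ 2 = (A + B) ^ 2 := by
      simp
      linear_combination (A + B) ^ 2 * Real.sin_sq_add_cos_sq d
    rw [this, Real.sqrt_sq hABpos.le]
  · rw [e2]
    have : ((A - B) • ![Real.cos (Real.pi / 2 + d), Real.sin (Real.pi / 2 + d)]) 0 ^ 2
        + ((A - B) • ![Real.cos (Real.pi / 2 + d), Real.sin (Real.pi / 2 + d)]) 1 ^ 2
        = (A - B) ^ 2 := by
      simp
      linear_combination (A - B) ^ 2 * Real.sin_sq_add_cos_sq (Real.pi / 2 + d)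
    rw [this, Real.sqrt_sq hABd.le]
  · nlinarith
  · nlinarith
end

section
/- Let α > 0 and let G be a subgroup of SL(2,ℝ) containing g₀ = (cosh α, sinh(α)/α; α sinh α, cosh α) and a matrix g such that g v̄₊ ∉ {v̄₊, v̄₋} and g v̄₋ ∉ {v̄₊, v̄₋}, where v± = (1, ±α)ᵀ. Then for every direction v̄ ∈ P(ℝ²), the orbit {h v̄ : h ∈ G} contains at least 3 elements. -/
/-!
The hyperbolic element `g₀` acts on `ℙ¹` with exactly two fixed points, `v̄₊` and `v̄₋`, and so
does `g₀²`, because `g₀ = boost α α` lies in the one-parameter group `t ↦ boost α t`, whose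
nontrivial members all share the eigendirections `v̄±`. Hence a direction `v̄ ∉ {v̄₊, v̄₋}` has the
three distinct images `v̄, g₀ v̄, g₀² v̄`. For `v̄ ∈ {v̄₊, v̄₋}` the images `v̄, g v̄, g₀ g v̄` are
distinct: `g v̄` lies outside `{v̄₊, v̄₋}`, so `g₀` does not fix it, while `g₀` fixes `v̄`.
-/

open Projectivization Matrix Real
open scoped LinearAlgebra.Projectivization

theorem MulAction.exists_three_smul_pairwise_ne {G X : Type*} [Group G] [MulAction G X]
    {H : Subgroup G} {E : Set X} {a b : G} (ha : a ∈ H) (hb : b ∈ H)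
    (ha_fix : ∀ x, a • x = x ↔ x ∈ E) (ha_sq_fix : ∀ x, (a * a) • x = x → x ∈ E)
    (hb_move : ∀ x ∈ E, b • x ∉ E) (x : X) :
    ∃ h₁ h₂ h₃ : G, h₁ ∈ H ∧ h₂ ∈ H ∧ h₃ ∈ H ∧
      h₁ • x ≠ h₂ • x ∧ h₁ • x ≠ h₃ • x ∧ h₂ • x ≠ h₃ • x := by
  by_cases hx : x ∈ E
  · have hbx : b • x ∉ E := hb_move x hx
    refine ⟨1, b, a * b, one_mem H, hb, mul_mem ha hb, ?_, ?_, ?_⟩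
    · rw [one_smul]
      exact fun h => hbx (h ▸ hx)
    · rw [one_smul, mul_smul]
      intro h
      have hxbx : x = b • x := smul_left_cancel a (((ha_fix x).2 hx).trans h)
      exact hbx (hxbx ▸ hx)
    · rw [mul_smul]
      exact fun h => hbx ((ha_fix _).1 h.symm)
  · refine ⟨1, a, a * a, one_mem H, ha, mul_mem ha ha, ?_, ?_, ?_⟩
    · rw [one_smul]
      exact fun h => hx ((ha_fix x).1 h.symm)
    · rw [one_smul]
      exact fun h => hx (ha_sq_fix x h.symm)
    · rw [mul_smul]
      exact fun h => hx ((ha_fix x).1 (smul_left_cancel a h).symm)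

theorem Projectivization.mk_eq_mk_iff_fin_two {K : Type*} [Field K] {u w : Fin 2 → K}
    (hu : u ≠ 0) (hw : w ≠ 0) : mk K u hu = mk K w hw ↔ u 0 * w 1 = u 1 * w 0 := by
  rw [mk_eq_mk_iff']
  constructor
  · rintro ⟨a, rfl⟩
    simp only [Pi.smul_apply, smul_eq_mul]
    ring
  intro h
  by_cases hw0 : w 0 = 0
  · have hw1 : w 1 ≠ 0 := fun hw1 => hw (by ext i; fin_cases i <;> assumption)
    have hu0 : u 0 = 0 := by simpa [hw0, hw1] using h
    refine ⟨u 1 / w 1, funext fun i => ?_⟩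
    fin_cases i <;> simp [hw0, hu0, hw1]
  · refine ⟨u 0 / w 0, funext fun i => ?_⟩
    fin_cases i
    · simp [hw0]
    · simp only [Fin.mk_one, Pi.smul_apply, smul_eq_mul]
      field_simp
      linear_combination h

lemma Matrix.SpecialLinearGroup.submodule_smul_mk {K ι : Type*} [Field K] [Fintype ι]
    [DecidableEq ι] (h : SpecialLinearGroup ι K) {w : ι → K} (hw : w ≠ 0) :
    (h • mk K w hw).submodule = K ∙ ((h : Matrix ι ι K) *ᵥ w) := by
  rw [smul_mk, submodule_mk]
  rfl

noncomputable def boost (α t : ℝ) : Matrix (Fin 2) (Fin 2) ℝ :=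
  !![cosh t, sinh t / α; α * sinh t, cosh t]

theorem boost_add {α : ℝ} (hα : α ≠ 0) (s t : ℝ) : boost α (s + t) = boost α s * boost α t := by
  ext i j
  fin_cases i <;> fin_cases j <;> simp [boost, mul_apply, Fin.sum_univ_two, cosh_add, sinh_add] <;>
    field_simp <;> ring

theorem boost_smul_eq_self_iff {α t : ℝ} (hα : α ≠ 0) (ht : t ≠ 0)
    {g : SpecialLinearGroup (Fin 2) ℝ} (hg : (g : Matrix (Fin 2) (Fin 2) ℝ) = boost α t)
    (x : ℙ ℝ (Fin 2 → ℝ)) :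
    g • x = x ↔
      x ∈ ({mk ℝ ![1, α] (by simp), mk ℝ ![1, -α] (by simp)} : Set (ℙ ℝ (Fin 2 → ℝ))) := by
  induction x using ind with | h w hw =>
  have hs : sinh t ≠ 0 := sinh_ne_zero.mpr ht
  have hgw : g • w = ![cosh t * w 0 + sinh t / α * w 1, α * sinh t * w 0 + cosh t * w 1] := by
    rw [Matrix.SpecialLinearGroup.smul_def, smul_eq_mulVec, hg, boost, mulVec_fin_two]
    simp
  simp only [smul_mk, Set.mem_insert_iff, Set.mem_singleton_iff, mk_eq_mk_iff_fin_two, hgw,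
    Matrix.cons_val_zero, Matrix.cons_val_one, mul_one, mul_neg]
  have hfactor : (cosh t * w 0 + sinh t / α * w 1) * w 1 - (α * sinh t * w 0 + cosh t * w 1) * w 0
      = -(sinh t / α) * ((w 0 * α - w 1) * (w 0 * α + w 1)) := by
    field_simp
    ring
  rw [← sub_eq_zero, hfactor, mul_eq_zero, or_iff_right (neg_ne_zero.mpr (div_ne_zero hs hα)),
    mul_eq_zero, sub_eq_zero, neg_eq_iff_add_eq_zero]

theorem stmt_8 (α : ℝ) (hα : α > 0)
    (G : Subgroup (Matrix.SpecialLinearGroup (Fin 2) ℝ))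
    (g₀ g : Matrix.SpecialLinearGroup (Fin 2) ℝ)
    (hg₀G : g₀ ∈ G) (hgG : g ∈ G)
    (hg₀ : (g₀ : Matrix (Fin 2) (Fin 2) ℝ)
        = !![Real.cosh α, Real.sinh α / α; α * Real.sinh α, Real.cosh α])
    (hgp : Submodule.span ℝ {(g : Matrix (Fin 2) (Fin 2) ℝ).mulVec ![(1 : ℝ), α]}
        ∉ ({Submodule.span ℝ {![(1 : ℝ), α]}, Submodule.span ℝ {![(1 : ℝ), -α]}}
            : Set (Submodule ℝ (Fin 2 → ℝ))))
    (hgm : Submodule.span ℝ {(g : Matrix (Fin 2) (Fin 2) ℝ).mulVec ![(1 : ℝ), -α]}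
        ∉ ({Submodule.span ℝ {![(1 : ℝ), α]}, Submodule.span ℝ {![(1 : ℝ), -α]}}
            : Set (Submodule ℝ (Fin 2 → ℝ)))) :
    ∀ w : Fin 2 → ℝ, w ≠ 0 →
      ∃ h₁ h₂ h₃ : Matrix.SpecialLinearGroup (Fin 2) ℝ, h₁ ∈ G ∧ h₂ ∈ G ∧ h₃ ∈ G ∧
        Submodule.span ℝ {(h₁ : Matrix (Fin 2) (Fin 2) ℝ).mulVec w}
          ≠ Submodule.span ℝ {(h₂ : Matrix (Fin 2) (Fin 2) ℝ).mulVec w} ∧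
        Submodule.span ℝ {(h₁ : Matrix (Fin 2) (Fin 2) ℝ).mulVec w}
          ≠ Submodule.span ℝ {(h₃ : Matrix (Fin 2) (Fin 2) ℝ).mulVec w} ∧
        Submodule.span ℝ {(h₂ : Matrix (Fin 2) (Fin 2) ℝ).mulVec w}
          ≠ Submodule.span ℝ {(h₃ : Matrix (Fin 2) (Fin 2) ℝ).mulVec w} := by
  intro w hw
  have hα₀ : α ≠ 0 := hα.ne'
  set E : Set (ℙ ℝ (Fin 2 → ℝ)) := {mk ℝ ![1, α] (by simp), mk ℝ ![1, -α] (by simp)} with hE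
  have hg₀_fix : ∀ x, g₀ • x = x ↔ x ∈ E := boost_smul_eq_self_iff hα₀ hα₀ hg₀
  have hg₀_sq : ((g₀ * g₀ : SpecialLinearGroup (Fin 2) ℝ) : Matrix (Fin 2) (Fin 2) ℝ)
      = boost α (α + α) := by
    rw [Matrix.SpecialLinearGroup.coe_mul, hg₀, boost_add hα₀]
    rfl
  have hg₀_sq_fix : ∀ x, (g₀ * g₀) • x = x → x ∈ E := fun x =>
    (boost_smul_eq_self_iff hα₀ (by positivity) hg₀_sq x).1
  have hg_move : ∀ x ∈ E, g • x ∉ E := by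
    rintro x (rfl | rfl)
    all_goals
      simp only [hE, Set.mem_insert_iff, Set.mem_singleton_iff, ← submodule_injective.eq_iff,
        SpecialLinearGroup.submodule_smul_mk, submodule_mk]
    · simpa using hgp
    · simpa using hgm
  obtain ⟨h₁, h₂, h₃, h₁G, h₂G, h₃G, h₁₂, h₁₃, h₂₃⟩ :=
    MulAction.exists_three_smul_pairwise_ne hg₀G hgG hg₀_fix hg₀_sq_fix hg_move (mk ℝ w hw)
  have hspan {h h' : SpecialLinearGroup (Fin 2) ℝ} (hne : h • mk ℝ w hw ≠ h' • mk ℝ w hw) :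
      ℝ ∙ ((h : Matrix (Fin 2) (Fin 2) ℝ) *ᵥ w) ≠ ℝ ∙ ((h' : Matrix (Fin 2) (Fin 2) ℝ) *ᵥ w) := by
    simpa only [SpecialLinearGroup.submodule_smul_mk] using submodule_injective.ne hne
  exact ⟨h₁, h₂, h₃, h₁G, h₂G, h₃G, hspan h₁₂, hspan h₁₃, hspan h₂₃⟩
end
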